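/- The transport–transform distance τ = τ_{C,p} is a metric on the space of finite point patterns over a metric space (X,d), where for ξ = Σᵢδ_{xᵢ} (m points) and η = Σⱼδ_{yⱼ} (n points), τ(ξ,η)^p is the minimum over all partial matchings (pairwise distinct i₁,…,i_l ∈ [m], pairwise distinct j₁,…,j_l ∈ [n]) of (m+n−2l)C^p + Σ_{r=1}^l d(x_{i_r},y_{j_r})^p, with C > 0 and p ≥ 1. -/

import Mathlib

/-- `p`-th power of the transport-transform distance between finite point patterns
(multisets): minimum over partial matchings (given by a multiset `γ` of matched pairs,
whose marginals are sub-multisets of `ξ` and `η`) of the penalized matching cost. -/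
noncomputable def ttP {X : Type*} [MetricSpace X] (C p : ℝ) (ξ η : Multiset X) : ℝ :=
  sInf { c : ℝ | ∃ γ : Multiset (X × X),
    γ.map Prod.fst ≤ ξ ∧ γ.map Prod.snd ≤ η ∧
    c = ((Multiset.card ξ : ℝ) + Multiset.card η - 2 * Multiset.card γ) * C ^ p
        + (γ.map (fun z => dist z.1 z.2 ^ p)).sum }

/-- The transport-transform (TT) distance `τ_{C,p}`. -/
noncomputable def ttDist {X : Type*} [MetricSpace X] (C p : ℝ) (ξ η : Multiset X) : ℝ :=
  ttP C p ξ η ^ (1 / p)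

/-!
Since a pattern has finitely many partial matchings, optimal matchings exist. Positivity and
symmetry are then immediate, and a matching of cost zero must match every point to itself.

For the triangle inequality, glue optimal matchings `γ₁ : ξ → η` and `γ₂ : η → ζ` along the
points of `η` matched by both; the composite `δ` matches `x` to `z`
whenever `x ~ y ~ z` and leaves everything else unmatched. Record for each relevant point the
pair (its cost in `γ₁`, its cost in `γ₂`), with `C` standing for "unmatched".
The `p`-th power sums of the two coordinates are bounded by the costs of `γ₁` and `γ₂`, the
cost of `δ` is bounded by the `p`-th power sum of the coordinate sums (triangle inequality of
`d`), and Minkowski's inequality concludes.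
-/

namespace Multiset

theorem Lp_add_le_of_nonneg {ι : Type*} (s : Multiset ι) {f g : ι → ℝ} {p : ℝ} (hp : 1 ≤ p)
    (hf : ∀ i ∈ s, 0 ≤ f i) (hg : ∀ i ∈ s, 0 ≤ g i) :
    ((s.map fun i => (f i + g i) ^ p).sum) ^ (1 / p) ≤
      ((s.map fun i => f i ^ p).sum) ^ (1 / p) + ((s.map fun i => g i ^ p).sum) ^ (1 / p) := by
  classical
  simp only [← map_univ s, ← Finset.sum_eq_multiset_sum]
  exact Real.Lp_add_le_of_nonneg _ hp (fun _ _ => hf _ coe_mem) (fun _ _ => hg _ coe_mem)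

theorem rpow_le_add_rpow_of_Lp {s : Multiset (ℝ × ℝ)} {p c c₁ c₂ : ℝ} (hp : 1 ≤ p)
    (hs : ∀ z ∈ s, 0 ≤ z.1 ∧ 0 ≤ z.2) (hc : 0 ≤ c) (h : c ≤ (s.map fun z => (z.1 + z.2) ^ p).sum)
    (h₁ : (s.map fun z => z.1 ^ p).sum ≤ c₁) (h₂ : (s.map fun z => z.2 ^ p).sum ≤ c₂) :
    c ^ (1 / p) ≤ c₁ ^ (1 / p) + c₂ ^ (1 / p) := by
  have hp0 : 0 ≤ 1 / p := by positivity
  have hs₁ : 0 ≤ (s.map fun z => z.1 ^ p).sum :=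
    sum_nonneg (forall_mem_map_iff.2 fun z hz => Real.rpow_nonneg (hs z hz).1 p)
  have hs₂ : 0 ≤ (s.map fun z => z.2 ^ p).sum :=
    sum_nonneg (forall_mem_map_iff.2 fun z hz => Real.rpow_nonneg (hs z hz).2 p)
  calc c ^ (1 / p) ≤ (s.map fun z => (z.1 + z.2) ^ p).sum ^ (1 / p) :=
        Real.rpow_le_rpow hc h hp0
    _ ≤ (s.map fun z => z.1 ^ p).sum ^ (1 / p) + (s.map fun z => z.2 ^ p).sum ^ (1 / p) :=
        Lp_add_le_of_nonneg s hp (fun z hz => (hs z hz).1) (fun z hz => (hs z hz).2)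
    _ ≤ c₁ ^ (1 / p) + c₂ ^ (1 / p) := by
        gcongr

theorem le_card_nsmul_val {α : Type*} {s : Multiset α} {t : Finset α} (h : ∀ a ∈ s, a ∈ t) :
    s ≤ card s • t.val := by
  classical
  refine le_iff_count.2 fun a => ?_
  by_cases ha : a ∈ t
  · rw [count_nsmul, count_eq_one_of_mem t.nodup ha, mul_one]
    exact count_le_card a s
  · rw [count_eq_zero_of_notMem fun has => ha (h a has)]
    exact Nat.zero_le _

theorem add_add_le_of_disjoint {α : Type*} {s t u v : Multiset α} (ht : s + t ≤ v)
    (hu : s + u ≤ v) (htu : Disjoint t u) : s + t + u ≤ v := by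
  classical
  rw [add_assoc, add_eq_union_iff_disjoint.2 htu, add_union_distrib]
  exact union_le ht hu

theorem exists_gluing {α β δ : Type*} (A : Multiset (α × β)) (B : Multiset (β × δ)) :
    ∃ (T : Multiset (α × β × δ)) (ρ₁ : Multiset (α × β)) (ρ₂ : Multiset (β × δ)),
      A = T.map (fun t => (t.1, t.2.1)) + ρ₁ ∧ B = T.map Prod.snd + ρ₂ ∧
      Disjoint (ρ₁.map Prod.snd) (ρ₂.map Prod.fst) := by
  classical
  induction A using Multiset.induction with
  | empty => exact ⟨0, 0, B, by simp, by simp, by simp⟩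
  | cons z A ih =>
    obtain ⟨T, ρ₁, ρ₂, rfl, rfl, hdisj⟩ := ih
    by_cases hz : z.2 ∈ ρ₂.map Prod.fst
    · obtain ⟨w, hw, hwz⟩ := mem_map.1 hz
      refine ⟨(z.1, z.2, w.2) ::ₘ T, ρ₁, ρ₂.erase w, by simp, ?_,
        hdisj.mono_right (map_le_map (erase_le w ρ₂))⟩
      rw [map_cons, cons_add, ← add_cons, ← hwz, cons_erase hw]
    · refine ⟨T, z ::ₘ ρ₁, ρ₂, by simp, rfl, ?_⟩
      rw [map_cons]
      exact disjoint_cons_left.2 ⟨hz, hdisj⟩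

end Multiset

namespace TransportTransform

open Multiset

def IsMatching {α : Type*} (ξ η : Multiset α) (γ : Multiset (α × α)) : Prop :=
  γ.map Prod.fst ≤ ξ ∧ γ.map Prod.snd ≤ η

section

variable {α : Type*}

theorem IsMatching.exists_eq_add {ξ η : Multiset α} {γ : Multiset (α × α)}
    (h : IsMatching ξ η γ) :
    ∃ ξ' η', ξ = γ.map Prod.fst + ξ' ∧ η = γ.map Prod.snd + η' := by
  obtain ⟨ξ', rfl⟩ := Multiset.le_iff_exists_add.1 h.1
  obtain ⟨η', rfl⟩ := Multiset.le_iff_exists_add.1 h.2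
  exact ⟨ξ', η', rfl, rfl⟩

theorem IsMatching.swap {ξ η : Multiset α} {γ : Multiset (α × α)} (h : IsMatching ξ η γ) :
    IsMatching η ξ (γ.map Prod.swap) := by
  simpa [IsMatching, map_map, Function.comp_def, and_comm] using h

theorem finite_setOf_isMatching (ξ η : Multiset α) : {γ | IsMatching ξ η γ}.Finite := by
  classical
  refine ((card ξ • (ξ.toFinset ×ˢ η.toFinset).val).powerset.toFinset.finite_toSet).subset ?_
  intro γ h
  have hγ : ∀ z ∈ γ, z ∈ ξ.toFinset ×ˢ η.toFinset := fun z hz => by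
    simpa using ⟨mem_of_le h.1 (mem_map_of_mem _ hz), mem_of_le h.2 (mem_map_of_mem _ hz)⟩
  have hcard : card γ ≤ card ξ := by simpa using card_le_card h.1
  simpa using (le_card_nsmul_val hγ).trans (nsmul_le_nsmul_left (zero_le _) hcard)

end

variable {X : Type*} [MetricSpace X] {C p : ℝ}

noncomputable def matchingCost (C p : ℝ) (ξ η : Multiset X) (γ : Multiset (X × X)) : ℝ :=
  ((card ξ : ℝ) + card η - 2 * card γ) * C ^ p + (γ.map fun z => dist z.1 z.2 ^ p).sum

theorem ttP_eq_sInf (C p : ℝ) (ξ η : Multiset X) :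
    ttP C p ξ η = sInf (matchingCost C p ξ η '' {γ | IsMatching ξ η γ}) := by
  simp only [ttP, matchingCost, IsMatching, Set.image, Set.mem_ofPred_eq, and_assoc, eq_comm]

theorem matchingCost_add_add {ξ' η' : Multiset X} (γ : Multiset (X × X)) :
    matchingCost C p (γ.map Prod.fst + ξ') (γ.map Prod.snd + η') γ =
      ((card ξ' : ℝ) + card η') * C ^ p + (γ.map fun z => dist z.1 z.2 ^ p).sum := by
  simp only [matchingCost, card_add, card_map, Nat.cast_add]
  ring

theorem sum_map_dist_rpow_nonneg (γ : Multiset (X × X)) :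
    0 ≤ (γ.map fun z => dist z.1 z.2 ^ p).sum :=
  sum_nonneg (forall_mem_map_iff.2 fun _ _ => Real.rpow_nonneg dist_nonneg p)

theorem IsMatching.matchingCost_nonneg (hC : 0 ≤ C) {ξ η : Multiset X} {γ : Multiset (X × X)}
    (h : IsMatching ξ η γ) : 0 ≤ matchingCost C p ξ η γ := by
  obtain ⟨ξ', η', rfl, rfl⟩ := h.exists_eq_add
  rw [matchingCost_add_add]
  have := Real.rpow_nonneg hC p
  have := sum_map_dist_rpow_nonneg (p := p) γ
  positivity

theorem exists_isMatching_matchingCost_eq_ttP (C p : ℝ) (ξ η : Multiset X) :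
    ∃ γ, IsMatching ξ η γ ∧ matchingCost C p ξ η γ = ttP C p ξ η := by
  rw [ttP_eq_sInf]
  exact (Set.image_nonempty.2 ⟨0, show IsMatching ξ η 0 by simp [IsMatching]⟩).csInf_mem
    ((finite_setOf_isMatching ξ η).image _)

theorem ttP_le_matchingCost {ξ η : Multiset X} {γ : Multiset (X × X)} (h : IsMatching ξ η γ) :
    ttP C p ξ η ≤ matchingCost C p ξ η γ := by
  rw [ttP_eq_sInf]
  exact csInf_le ((finite_setOf_isMatching ξ η).image _).bddBelow ⟨γ, h, rfl⟩

theorem ttP_nonneg (hC : 0 ≤ C) (ξ η : Multiset X) : 0 ≤ ttP C p ξ η := by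
  obtain ⟨γ, h, hγ⟩ := exists_isMatching_matchingCost_eq_ttP C p ξ η
  exact hγ ▸ h.matchingCost_nonneg hC

theorem matchingCost_map_swap (ξ η : Multiset X) (γ : Multiset (X × X)) :
    matchingCost C p η ξ (γ.map Prod.swap) = matchingCost C p ξ η γ := by
  simp only [matchingCost, card_map, map_map, Function.comp_def, Prod.fst_swap, Prod.snd_swap,
    dist_comm]
  ring

theorem ttP_le_ttP_swap (C p : ℝ) (ξ η : Multiset X) : ttP C p ξ η ≤ ttP C p η ξ := by
  obtain ⟨γ, h, hγ⟩ := exists_isMatching_matchingCost_eq_ttP C p η ξ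
  calc ttP C p ξ η ≤ matchingCost C p ξ η (γ.map Prod.swap) := ttP_le_matchingCost h.swap
    _ = ttP C p η ξ := by rw [matchingCost_map_swap, hγ]

theorem ttP_comm (C p : ℝ) (ξ η : Multiset X) : ttP C p ξ η = ttP C p η ξ :=
  (ttP_le_ttP_swap C p ξ η).antisymm (ttP_le_ttP_swap C p η ξ)

theorem ttP_self (hC : 0 ≤ C) (hp : p ≠ 0) (ξ : Multiset X) : ttP C p ξ ξ = 0 := by
  have hdiag : IsMatching ξ ξ (ξ.map fun x => (x, x)) := by
    simp [IsMatching, map_map]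
  refine le_antisymm ?_ (ttP_nonneg hC ξ ξ)
  calc ttP C p ξ ξ ≤ matchingCost C p ξ ξ (ξ.map fun x => (x, x)) := ttP_le_matchingCost hdiag
    _ = 0 := by simp [matchingCost, map_map, Real.zero_rpow hp, two_mul]

theorem eq_of_ttP_eq_zero (hC : 0 < C) (hp : p ≠ 0) {ξ η : Multiset X} (h : ttP C p ξ η = 0) :
    ξ = η := by
  obtain ⟨γ, hγ, hcost⟩ := exists_isMatching_matchingCost_eq_ttP C p ξ η
  obtain ⟨ξ', η', rfl, rfl⟩ := hγ.exists_eq_add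
  rw [h, matchingCost_add_add] at hcost
  obtain ⟨hunmatched, hdist⟩ :=
    (add_eq_zero_iff_of_nonneg (by positivity) (sum_map_dist_rpow_nonneg γ)).1 hcost
  have hcard : card ξ' + card η' = 0 := by
    exact_mod_cast (mul_eq_zero.1 hunmatched).resolve_right (Real.rpow_pos_of_pos hC p).ne'
  have hdiag : ∀ z ∈ γ, z.1 = z.2 := fun z hz =>
    dist_eq_zero.1 <| (Real.rpow_eq_zero dist_nonneg hp).1 <|
      all_zero_of_le_zero_le_of_sum_eq_zero (forall_mem_map_iff.2 fun _ _ =>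
        Real.rpow_nonneg dist_nonneg p) hdist _ (mem_map_of_mem _ hz)
  rw [card_eq_zero.1 (by omega : card ξ' = 0), card_eq_zero.1 (by omega : card η' = 0),
    map_congr rfl hdiag]

def gluingPairs (C : ℝ) (T : Multiset (X × X × X)) (ρ₁ ρ₂ : Multiset (X × X))
    (ξ' ζ' : Multiset X) : Multiset (ℝ × ℝ) :=
  T.map (fun t => (dist t.1 t.2.1, dist t.2.1 t.2.2)) + ρ₁.map (fun z => (dist z.1 z.2, C)) +
    ρ₂.map (fun z => (C, dist z.1 z.2)) + ξ'.map (fun _ => (C, 0)) + ζ'.map (fun _ => (0, C))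

variable {T : Multiset (X × X × X)} {ρ₁ ρ₂ : Multiset (X × X)} {ξ' ζ' : Multiset X}

theorem nonneg_of_mem_gluingPairs (hC : 0 ≤ C) :
    ∀ z ∈ gluingPairs C T ρ₁ ρ₂ ξ' ζ', 0 ≤ z.1 ∧ 0 ≤ z.2 := by
  simp only [gluingPairs, mem_add, mem_map]
  rintro _ ((((⟨t, -, rfl⟩ | ⟨z, -, rfl⟩) | ⟨z, -, rfl⟩) | ⟨x, -, rfl⟩) | ⟨x, -, rfl⟩) <;>
    exact ⟨by first | exact dist_nonneg | exact hC | exact le_rfl,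
      by first | exact dist_nonneg | exact hC | exact le_rfl⟩

theorem sum_gluingPairs_fst_rpow (hp : p ≠ 0) :
    ((gluingPairs C T ρ₁ ρ₂ ξ' ζ').map fun z => z.1 ^ p).sum =
      (T.map fun t => dist t.1 t.2.1 ^ p).sum + (ρ₁.map fun z => dist z.1 z.2 ^ p).sum +
        ((card ρ₂ : ℝ) + card ξ') * C ^ p := by
  simp only [gluingPairs, map_const', map_add, map_map, Function.comp_apply, map_replicate,
    Real.zero_rpow hp, sum_add, sum_replicate, nsmul_eq_mul]
  ring

theorem sum_gluingPairs_snd_rpow (hp : p ≠ 0) :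
    ((gluingPairs C T ρ₁ ρ₂ ξ' ζ').map fun z => z.2 ^ p).sum =
      (T.map fun t => dist t.2.1 t.2.2 ^ p).sum + (ρ₂.map fun z => dist z.1 z.2 ^ p).sum +
        ((card ρ₁ : ℝ) + card ζ') * C ^ p := by
  simp only [gluingPairs, map_const', map_add, map_map, Function.comp_apply, map_replicate,
    Real.zero_rpow hp, sum_add, sum_replicate, nsmul_eq_mul]
  ring

theorem le_sum_gluingPairs_add_rpow (hC : 0 ≤ C) (hp : 0 ≤ p) :
    (T.map fun t => dist t.1 t.2.2 ^ p).sum +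
        ((card ρ₁ : ℝ) + card ρ₂ + card ξ' + card ζ') * C ^ p ≤
      ((gluingPairs C T ρ₁ ρ₂ ξ' ζ').map fun z => (z.1 + z.2) ^ p).sum := by
  have hT : (T.map fun t => dist t.1 t.2.2 ^ p).sum ≤
      (T.map fun t => (dist t.1 t.2.1 + dist t.2.1 t.2.2) ^ p).sum :=
    sum_map_le_sum_map _ _ fun t _ =>
      Real.rpow_le_rpow dist_nonneg (dist_triangle _ _ _) hp
  have hρ₁ : (card ρ₁ : ℝ) * C ^ p ≤ (ρ₁.map fun z => (dist z.1 z.2 + C) ^ p).sum := by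
    simpa [map_const'] using sum_map_le_sum_map (fun _ => C ^ p) _ fun z _ =>
      Real.rpow_le_rpow hC (le_add_of_nonneg_left dist_nonneg) hp
  have hρ₂ : (card ρ₂ : ℝ) * C ^ p ≤ (ρ₂.map fun z => (C + dist z.1 z.2) ^ p).sum := by
    simpa [map_const'] using sum_map_le_sum_map (fun _ => C ^ p) _ fun z _ =>
      Real.rpow_le_rpow hC (le_add_of_nonneg_right dist_nonneg) hp
  simp only [gluingPairs, map_const', map_add, map_map, Function.comp_apply, map_replicate,
    add_zero, zero_add, sum_add, sum_replicate, nsmul_eq_mul]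
  linarith

theorem IsMatching.exists_matchingCost_rpow_le (hC : 0 ≤ C) (hp : 1 ≤ p) {ξ η ζ : Multiset X}
    {γ₁ γ₂ : Multiset (X × X)} (h₁ : IsMatching ξ η γ₁) (h₂ : IsMatching η ζ γ₂) :
    ∃ δ, IsMatching ξ ζ δ ∧ matchingCost C p ξ ζ δ ^ (1 / p) ≤
      matchingCost C p ξ η γ₁ ^ (1 / p) + matchingCost C p η ζ γ₂ ^ (1 / p) := by
  obtain ⟨T, ρ₁, ρ₂, rfl, rfl, hdisj⟩ := exists_gluing γ₁ γ₂
  obtain ⟨ξ', -, hξ, -⟩ := h₁.exists_eq_add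
  obtain ⟨-, ζ', -, hζ⟩ := h₂.exists_eq_add
  obtain ⟨η', hη⟩ := Multiset.le_iff_exists_add.1 <|
    add_add_le_of_disjoint (by simpa [map_map, Function.comp_def] using h₁.2)
      (by simpa [map_map, Function.comp_def] using h₂.1) hdisj
  set δ := T.map fun t => (t.1, t.2.2)
  have hδ : IsMatching ξ ζ δ := by
    subst hξ hζ
    simp only [IsMatching, δ, map_add, map_map, Function.comp_def, add_assoc]
    exact ⟨le_add_right le_rfl, le_add_right le_rfl⟩
  have hcost₁ : matchingCost C p ξ η (T.map (fun t => (t.1, t.2.1)) + ρ₁) =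
      (T.map fun t => dist t.1 t.2.1 ^ p).sum + (ρ₁.map fun z => dist z.1 z.2 ^ p).sum +
        ((card ρ₂ : ℝ) + card ξ' + card η') * C ^ p := by
    subst hξ hη
    simp only [matchingCost, card_add, card_map, map_add, sum_add, map_map, Function.comp_def,
      Nat.cast_add]
    ring
  have hcost₂ : matchingCost C p η ζ (T.map Prod.snd + ρ₂) =
      (T.map fun t => dist t.2.1 t.2.2 ^ p).sum + (ρ₂.map fun z => dist z.1 z.2 ^ p).sum +
        ((card ρ₁ : ℝ) + card ζ' + card η') * C ^ p := by
    subst hζ hη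
    simp only [matchingCost, card_add, card_map, map_add, sum_add, map_map, Function.comp_def,
      Nat.cast_add]
    ring
  have hcostδ : matchingCost C p ξ ζ δ = (T.map fun t => dist t.1 t.2.2 ^ p).sum +
      ((card ρ₁ : ℝ) + card ρ₂ + card ξ' + card ζ') * C ^ p := by
    subst hξ hζ
    simp only [matchingCost, δ, card_add, card_map, map_map, Function.comp_def, Nat.cast_add]
    ring
  have hp0 : 0 < p := by linarith
  have hCη' : 0 ≤ (card η' : ℝ) * C ^ p := by positivity
  refine ⟨δ, hδ, rpow_le_add_rpow_of_Lp hp (nonneg_of_mem_gluingPairs hC)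
    (hδ.matchingCost_nonneg hC) (hcostδ ▸ le_sum_gluingPairs_add_rpow hC hp0.le) ?_ ?_⟩
  · rw [sum_gluingPairs_fst_rpow hp0.ne', hcost₁]
    linarith
  · rw [sum_gluingPairs_snd_rpow hp0.ne', hcost₂]
    linarith

theorem ttP_eq_zero_iff (hC : 0 < C) (hp : p ≠ 0) {ξ η : Multiset X} :
    ttP C p ξ η = 0 ↔ ξ = η :=
  ⟨eq_of_ttP_eq_zero hC hp, fun h => h ▸ ttP_self hC.le hp ξ⟩

theorem ttDist_triangle (hC : 0 ≤ C) (hp : 1 ≤ p) (ξ η ζ : Multiset X) :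
    ttDist C p ξ ζ ≤ ttDist C p ξ η + ttDist C p η ζ := by
  obtain ⟨γ₁, h₁, hγ₁⟩ := exists_isMatching_matchingCost_eq_ttP C p ξ η
  obtain ⟨γ₂, h₂, hγ₂⟩ := exists_isMatching_matchingCost_eq_ttP C p η ζ
  obtain ⟨δ, hδ, hle⟩ := h₁.exists_matchingCost_rpow_le hC hp h₂
  rw [ttDist, ttDist, ttDist, ← hγ₁, ← hγ₂]
  exact (Real.rpow_le_rpow (ttP_nonneg hC ξ ζ) (ttP_le_matchingCost hδ) (by positivity)).trans hle

end TransportTransform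

open TransportTransform

/-- The TT-distance is a metric on the space of finite point patterns. -/
theorem stmt3 {X : Type*} [MetricSpace X] (C p : ℝ) (hC : 0 < C) (hp : 1 ≤ p) :
    (∀ ξ η : Multiset X, 0 ≤ ttDist C p ξ η) ∧
    (∀ ξ η : Multiset X, ttDist C p ξ η = 0 ↔ ξ = η) ∧
    (∀ ξ η : Multiset X, ttDist C p ξ η = ttDist C p η ξ) ∧
    (∀ ξ η ζ : Multiset X, ttDist C p ξ ζ ≤ ttDist C p ξ η + ttDist C p η ζ) := by
  have hp0 : p ≠ 0 := (zero_lt_one.trans_le hp).ne'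
  refine ⟨fun ξ η => Real.rpow_nonneg (ttP_nonneg hC.le ξ η) _, fun ξ η => ?_,
    fun ξ η => by rw [ttDist, ttDist, ttP_comm], ttDist_triangle hC.le hp⟩
  rw [ttDist, Real.rpow_eq_zero (ttP_nonneg hC.le ξ η) (one_div_ne_zero hp0)]
  exact ttP_eq_zero_iff hC hp0
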